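/- arXiv:2009.08145 — 2 statements merged into one kernel-verified Lean document; each statement's English description precedes it below -/
import Mathlib

section
/- Let 𝔉 be a hereditary formation and G a finite group. Then the 𝔉-hypercentre Z_𝔉(G) is 𝔉-hypercentral in G, i.e. either Z_𝔉(G) = 1 or every chief factor of G below Z_𝔉(G) is 𝔉-central in G. -/
/-- A class of finite groups. -/
def GroupClass : Type 1 :=
  ∀ (G : Type) [Group G] [Finite G], Prop

instance SemidirectProduct.instFinite {N G : Type*} [Group N] [Group G] [Finite N] [Finite G]
    (φ : G →* MulAut N) : Finite (N ⋊[φ] G) :=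
  Finite.of_injective (fun x => (x.left, x.right)) (by
    rintro ⟨a, b⟩ ⟨c, d⟩ h
    simpa [Prod.ext_iff, SemidirectProduct.ext_iff] using h)

/-- The `F`-residual of a finite group `G`. -/
def GroupClass.residual (F : GroupClass) (G : Type) [Group G] [Finite G] : Subgroup G :=
  sInf {N : Subgroup G | ∃ _ : N.Normal, F (G ⧸ N)}

/-- `F` is a formation. -/
structure GroupClass.IsFormation (F : GroupClass) : Prop where
  nonempty : ∃ (G : Type) (_ : Group G) (_ : Finite G), F G
  isoClosed : ∀ (G H : Type) [Group G] [Finite G] [Group H] [Finite H],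
    (G ≃* H) → F G → F H
  quot_residual_mem : ∀ (G : Type) [Group G] [Finite G] (N : Subgroup G) (_ : N.Normal),
    F.residual G ≤ N → F (G ⧸ N)

/-- `F` is hereditary (subgroup-closed). -/
def GroupClass.Hereditary (F : GroupClass) : Prop :=
  ∀ (G : Type) [Group G] [Finite G], F G → ∀ H : Subgroup G, F H

/-- `F` is saturated. -/
def GroupClass.Saturated (F : GroupClass) : Prop :=
  ∀ (G : Type) [Group G] [Finite G], F.residual G ≤ frattini G → F G

section SectionMachinery

variable {G : Type} [Group G]

/-- conjugation by `g` preserves `S.subgroupOf R` when `R, S` are normal. -/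
theorem conj_map_subgroupOf (R S : Subgroup G) [hR : R.Normal] [hS : S.Normal] (g : G) :
    (S.subgroupOf R).map ((MulAut.conjNormal g : MulAut R) : R →* R) = S.subgroupOf R := by
  ext x
  simp only [Subgroup.mem_map, Subgroup.mem_subgroupOf]
  constructor
  · rintro ⟨y, hy, rfl⟩
    simpa [MulAut.conjNormal_apply] using hS.conj_mem _ hy g
  · intro hx
    refine ⟨(MulAut.conjNormal g).symm x, ?_, by simp⟩
    simp only [Subgroup.mem_subgroupOf, MulAut.conjNormal_symm_apply]
    simpa using hS.conj_mem _ hx g⁻¹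

/-- The conjugation action of `G` on the normal section `R/S`. -/
def secAction (R S : Subgroup G) [R.Normal] [S.Normal] :
    G →* MulAut (R ⧸ S.subgroupOf R) where
  toFun g := QuotientGroup.congr (S.subgroupOf R) (S.subgroupOf R)
      (MulAut.conjNormal g) (conj_map_subgroupOf R S g)
  map_one' := by
    ext x
    induction x using QuotientGroup.induction_on with
    | H r => simp [QuotientGroup.congr_mk]
  map_mul' g₁ g₂ := by
    ext x
    induction x using QuotientGroup.induction_on with
    | H r => simp [QuotientGroup.congr_mk, map_mul]

/-- The centraliser in `G` of the normal section `R/S`. -/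
def secCentralizer (R S : Subgroup G) [R.Normal] [S.Normal] : Subgroup G :=
  (secAction R S).ker

instance secCentralizer.normal (R S : Subgroup G) [R.Normal] [S.Normal] :
    (secCentralizer R S).Normal := MonoidHom.normal_ker _

/-- The semidirect product `[R/S](G/K)` for a normal subgroup `K ≤ C_G(R/S)`. -/
abbrev secSDP (R S K : Subgroup G) [R.Normal] [S.Normal] [K.Normal]
    (hK : K ≤ secCentralizer R S) : Type :=
  (R ⧸ S.subgroupOf R) ⋊[QuotientGroup.lift K (secAction R S) (fun _ hx => hK hx)] (G ⧸ K)

end SectionMachinery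

/-- The normal section `R/S` of `G` is `F`-central in `G`. -/
def FCentralSection (F : GroupClass) {G : Type} [Group G] [Finite G]
    (R S : Subgroup G) [R.Normal] [S.Normal] : Prop :=
  ∃ (K : Subgroup G) (hK : K.Normal),
    haveI := hK
    ∃ hle : K ≤ secCentralizer R S, F (secSDP R S K hle)

/-- `H/K` is a chief factor of `G`. -/
def IsChiefFactor {G : Type} [Group G] (H K : Subgroup G) : Prop :=
  H.Normal ∧ K.Normal ∧ K < H ∧
    ∀ L : Subgroup G, L.Normal → K ≤ L → L ≤ H → L = K ∨ L = H

/-- A normal subgroup `N` of `G` is `F`-hypercentral in `G`: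
every chief factor of `G` below `N` is `F`-central in `G`. -/
def FHypercentralIn (F : GroupClass) {G : Type} [Group G] [Finite G] (N : Subgroup G) : Prop :=
  N.Normal ∧ ∀ H K : Subgroup G, ∀ hcf : IsChiefFactor H K, H ≤ N →
    @FCentralSection F G _ _ H K hcf.1 hcf.2.1

/-- The `F`-hypercentre of `G`: the product of all `F`-hypercentral normal subgroups. -/
def FHypercentre (F : GroupClass) (G : Type) [Group G] [Finite G] : Subgroup G :=
  ⨆ (N : Subgroup G) (_ : FHypercentralIn F N), N

/-- `A` is `K`-`F`-subnormal in `G`. -/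
def KFSubnormalIn (F : GroupClass) {G : Type} [Group G] [Finite G] (A : Subgroup G) : Prop :=
  ∃ (n : ℕ) (c : ℕ → Subgroup G), c 0 = A ∧ c n = ⊤ ∧
    ∀ i < n, c i ≤ c (i + 1) ∧
      (((c i).subgroupOf (c (i + 1))).Normal ∨
        F ((c (i + 1)) ⧸ ((c i).subgroupOf (c (i + 1))).normalCore))


section Lemma4Aux

open Pointwise

variable {G : Type} [Group G]

theorem secAction_apply_mk (R S : Subgroup G) [R.Normal] [S.Normal] (g : G) (r : R) :
    secAction R S g (QuotientGroup.mk r) = QuotientGroup.mk (MulAut.conjNormal g r) := rfl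

theorem mem_secCentralizer_iff {R S : Subgroup G} [R.Normal] [S.Normal] {g : G} :
    g ∈ secCentralizer R S ↔ ∀ x, secAction R S g x = x := by
  rw [secCentralizer, MonoidHom.mem_ker]
  constructor
  · intro h x; rw [h]; rfl
  · intro h; ext x; exact h x

/-- Equivariant isomorphisms of normal sections give equal centralizers. -/
theorem secCentralizer_eq_of_equiv {R S R' S' : Subgroup G} [R.Normal] [S.Normal]
    [R'.Normal] [S'.Normal]
    (e : (R ⧸ S.subgroupOf R) ≃* (R' ⧸ S'.subgroupOf R'))
    (he : ∀ g x, e (secAction R S g x) = secAction R' S' g (e x)) :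
    secCentralizer R S = secCentralizer R' S' := by
  ext g
  rw [mem_secCentralizer_iff, mem_secCentralizer_iff]
  constructor
  · intro h y
    have := he g (e.symm y)
    rw [h (e.symm y), e.apply_symm_apply] at this
    exact this.symm
  · intro h x
    apply e.injective
    rw [he g x, h (e x)]

/-- Equivariant isomorphisms of normal sections transfer `F`-centrality. -/
theorem fcentral_of_equiv (F : GroupClass) (hF : F.IsFormation) [Finite G]
    {R S R' S' : Subgroup G} [R.Normal] [S.Normal] [R'.Normal] [S'.Normal]
    (e : (R ⧸ S.subgroupOf R) ≃* (R' ⧸ S'.subgroupOf R'))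
    (he : ∀ g x, e (secAction R S g x) = secAction R' S' g (e x))
    (h : FCentralSection F R S) : FCentralSection F R' S' := by
  obtain ⟨K, hKn, hle, hf⟩ := h
  haveI := hKn
  have hcent := secCentralizer_eq_of_equiv e he
  refine ⟨K, hKn, hcent ▸ hle, ?_⟩
  have key : ∀ (q : G ⧸ K) (b),
      e ((QuotientGroup.lift K (secAction R S) (fun _ hx => hle hx) q) b)
        = (QuotientGroup.lift K (secAction R' S') (fun _ hx => (hcent ▸ hle : K ≤ secCentralizer R' S') hx) q) (e b) := by
    intro q b
    induction q using QuotientGroup.induction_on with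
    | H g => exact he g b
  refine hF.isoClosed _ _ ?_ hf
  exact
  { toFun := fun x => ⟨e x.left, x.right⟩
    invFun := fun x => ⟨e.symm x.left, x.right⟩
    left_inv := fun x => by ext <;> simp
    right_inv := fun x => by ext <;> simp
    map_mul' := fun x y => by
      ext
      · show e (x.left * _) = e x.left * _
        rw [map_mul, key]
      · rfl }

/-- The second isomorphism theorem for normal sections, equivariantly. -/
theorem exists_gequiv {R S R' S' : Subgroup G} [R.Normal] [S.Normal] [R'.Normal] [S'.Normal]
    (hRR' : R ≤ R') (hS : S = R ⊓ S') (hR' : R' ≤ S' ⊔ R) :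
    ∃ e : (R ⧸ S.subgroupOf R) ≃* (R' ⧸ S'.subgroupOf R'),
      ∀ g x, e (secAction R S g x) = secAction R' S' g (e x) := by
  set φ : R →* R' ⧸ S'.subgroupOf R' :=
    (QuotientGroup.mk' (S'.subgroupOf R')).comp (Subgroup.inclusion hRR') with hφ
  have hker : ∀ r : R, φ r = 1 ↔ r ∈ S.subgroupOf R := by
    intro r
    rw [hφ]
    simp only [MonoidHom.comp_apply, QuotientGroup.mk'_apply]
    rw [QuotientGroup.eq_one_iff]
    rw [Subgroup.mem_subgroupOf, Subgroup.mem_subgroupOf, Subgroup.coe_inclusion, hS,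
      Subgroup.mem_inf]
    exact ⟨fun h => ⟨r.2, h⟩, fun h => h.2⟩
  have hcond : ∀ r : R, r ∈ S.subgroupOf R → φ r = 1 := fun r hr => (hker r).2 hr
  set ψ : (R ⧸ S.subgroupOf R) →* R' ⧸ S'.subgroupOf R' :=
    QuotientGroup.lift (S.subgroupOf R) φ hcond with hψ
  have hinj : Function.Injective ψ := by
    rw [hψ]
    rw [← MonoidHom.ker_eq_bot_iff]
    rw [eq_bot_iff]
    intro x hx
    induction x using QuotientGroup.induction_on with
    | H r =>
      have : φ r = 1 := hx
      rw [hker] at this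
      simpa [QuotientGroup.eq_one_iff] using this
  have hsurj : Function.Surjective ψ := by
    intro y
    induction y using QuotientGroup.induction_on with
    | H r' =>
      have hr' : (r' : G) ∈ (S' : Set G) * (R : Set G) := by
        rw [← Subgroup.mul_normal S' R]
        exact_mod_cast hR' r'.2
      obtain ⟨s, hs, r, hr, hsr⟩ := hr'
      refine ⟨QuotientGroup.mk ⟨r, hr⟩, ?_⟩
      show φ ⟨r, hr⟩ = QuotientGroup.mk r'
      rw [hφ]
      simp only [MonoidHom.comp_apply, QuotientGroup.mk'_apply]
      rw [QuotientGroup.eq]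
      rw [Subgroup.mem_subgroupOf]
      show ((Subgroup.inclusion hRR' ⟨r, hr⟩ : R') : G)⁻¹ * (r' : G) ∈ S'
      rw [Subgroup.coe_inclusion]
      have : (r' : G) = s * r := hsr.symm
      rw [this]
      have : (r : G)⁻¹ * (s * r) = r⁻¹ * s * r := by group
      rw [this]
      exact Subgroup.Normal.conj_mem' ‹S'.Normal› s hs r
  refine ⟨MulEquiv.ofBijective ψ ⟨hinj, hsurj⟩, ?_⟩
  intro g x
  induction x using QuotientGroup.induction_on with
  | H r =>
    show ψ (secAction R S g (QuotientGroup.mk r)) = secAction R' S' g (ψ (QuotientGroup.mk r))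
    rw [secAction_apply_mk]
    show φ (MulAut.conjNormal g r) = secAction R' S' g (φ r)
    rw [hφ]
    simp only [MonoidHom.comp_apply, QuotientGroup.mk'_apply]
    rw [secAction_apply_mk]
    congr 1

theorem chief_inf {H K N : Subgroup G} [N.Normal] (hcf : IsChiefFactor H K)
    (hle : H ≤ K ⊔ N) : IsChiefFactor (H ⊓ N) (K ⊓ N) := by
  obtain ⟨hHn, hKn, hKH, hmax⟩ := hcf
  haveI := hHn; haveI := hKn
  have hdec : ∀ h : G, h ∈ H → ∃ k ∈ K, ∃ n ∈ N, k * n = h := by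
    intro h hh
    have : h ∈ (K : Set G) * (N : Set G) := by
      rw [← Subgroup.mul_normal K N]; exact_mod_cast hle hh
    obtain ⟨k, hk, n, hn, hkn⟩ := this
    exact ⟨k, hk, n, hn, hkn⟩
  refine ⟨inferInstance, inferInstance, lt_of_le_of_ne (inf_le_inf_right N hKH.le) ?_, ?_⟩
  · intro heq
    apply hKH.ne
    refine le_antisymm hKH.le (fun h hh => ?_)
    obtain ⟨k, hk, n, hn, hkn⟩ := hdec h hh
    have hnH : n ∈ H := by
      have : n = k⁻¹ * h := by rw [← hkn]; group
      rw [this]; exact mul_mem (inv_mem (hKH.le hk)) hh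
    have : n ∈ K ⊓ N := by rw [heq]; exact ⟨hnH, hn⟩
    rw [← hkn]
    exact mul_mem hk this.1
  · intro L hLn hKL hLH
    haveI := hLn
    have h1 : (K ⊔ L).Normal := inferInstance
    have h2 : K ≤ K ⊔ L := le_sup_left
    have h3 : K ⊔ L ≤ H := sup_le hKH.le (hLH.trans inf_le_left)
    rcases hmax (K ⊔ L) h1 h2 h3 with hc | hc
    · left
      refine le_antisymm (le_inf ?_ (hLH.trans inf_le_right)) hKL
      calc L ≤ K ⊔ L := le_sup_right
        _ = K := hc
    · right
      refine le_antisymm hLH (fun x hx => ?_)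
      have hxKL : x ∈ (K : Set G) * (L : Set G) := by
        rw [← Subgroup.mul_normal K L]
        exact_mod_cast hc ▸ hx.1
      obtain ⟨k, hk, l, hl, hkl⟩ := hxKL
      have hkN : k ∈ N := by
        have : k = x * l⁻¹ := by rw [← hkl]; group
        rw [this]
        exact mul_mem hx.2 (inv_mem ((hLH.trans inf_le_right) hl))
      have : k ∈ L := hKL ⟨hk, hkN⟩
      rw [← hkl]
      exact mul_mem this hl

theorem chief_sup {H K M : Subgroup G} [M.Normal] (hcf : IsChiefFactor H K)
    (h1 : H ⊓ M ≤ K) (h2 : K ≤ M) : IsChiefFactor (H ⊔ M) M := by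
  obtain ⟨hHn, hKn, hKH, hmax⟩ := hcf
  haveI := hHn; haveI := hKn
  refine ⟨inferInstance, inferInstance, lt_of_le_of_ne le_sup_right ?_, ?_⟩
  · intro heq
    apply hKH.ne
    refine le_antisymm hKH.le (fun h hh => h1 ⟨hh, ?_⟩)
    rw [heq]
    exact (le_sup_left : H ≤ H ⊔ M) hh
  · intro L hLn hML hLHM
    haveI := hLn
    have hKHL : K ≤ H ⊓ L := le_inf hKH.le (h2.trans hML)
    rcases hmax (H ⊓ L) inferInstance hKHL inf_le_left with hc | hc
    · left
      refine le_antisymm (fun x hx => ?_) hML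
      have hxHM : x ∈ (H : Set G) * (M : Set G) := by
        rw [← Subgroup.mul_normal H M]
        exact_mod_cast hLHM hx
      obtain ⟨h, hh, m, hm, hhm⟩ := hxHM
      have hhL : h ∈ L := by
        have : h = x * m⁻¹ := by rw [← hhm]; group
        rw [this]
        exact mul_mem hx (inv_mem (hML hm))
      have : h ∈ M := h2 (hc ▸ ⟨hh, hhL⟩ : h ∈ K)
      rw [← hhm]
      exact mul_mem this hm
    · right
      have hHL : H ≤ L := by rw [← hc]; exact inf_le_right
      exact le_antisymm hLHM (sup_le hHL hML)

theorem hyper_sup (F : GroupClass) (hF : F.IsFormation) [Finite G] {A B : Subgroup G}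
    (hA : FHypercentralIn F A) (hB : FHypercentralIn F B) :
    FHypercentralIn F (A ⊔ B) := by
  obtain ⟨hAn, hAc⟩ := hA
  obtain ⟨hBn, hBc⟩ := hB
  haveI := hAn; haveI := hBn
  refine ⟨inferInstance, ?_⟩
  intro H K hcf hle
  haveI := hcf.1; haveI := hcf.2.1
  have hKH : K ≤ H := hcf.2.2.1.le
  by_cases hc : H ≤ K ⊔ A
  · -- Case 1: H ≤ KA
    have hcf' := chief_inf hcf hc
    have hFc' := hAc (H ⊓ A) (K ⊓ A) hcf' inf_le_right
    have hSeq : K ⊓ A = (H ⊓ A) ⊓ K := by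
      ext x
      simp only [Subgroup.mem_inf]
      exact ⟨fun h => ⟨⟨hKH h.1, h.2⟩, h.1⟩, fun h => ⟨h.2, h.1.2⟩⟩
    have hR' : H ≤ K ⊔ (H ⊓ A) := by
      intro h hh
      have : h ∈ (K : Set G) * (A : Set G) := by
        rw [← Subgroup.mul_normal K A]; exact_mod_cast hc hh
      obtain ⟨k, hk, a, ha, hka⟩ := this
      have haH : a ∈ H ⊓ A := by
        refine Subgroup.mem_inf.2 ⟨?_, ha⟩
        have : a = k⁻¹ * h := by rw [← hka]; group
        rw [this]; exact mul_mem (inv_mem (hKH hk)) hh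
      rw [← hka]
      exact Subgroup.mul_mem_sup hk haH
    obtain ⟨e, he⟩ := exists_gequiv (S := K ⊓ A) (R := H ⊓ A) (S' := K) (R' := H)
      inf_le_left hSeq hR'
    exact fcentral_of_equiv F hF e he hFc'
  · -- Case 2
    have hHM : H ⊓ (K ⊔ A) = K := by
      rcases hcf.2.2.2 (H ⊓ (K ⊔ A)) inferInstance (le_inf hKH le_sup_left) inf_le_left
        with hc2 | hc2
      · exact hc2
      · exact absurd (inf_eq_left.mp hc2) hc
    set M := K ⊔ A with hMdef
    have hcf2 : IsChiefFactor (H ⊔ M) M := chief_sup hcf hHM.le le_sup_left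
    have hle2 : H ⊔ M ≤ M ⊔ B := by
      refine sup_le ?_ le_sup_left
      refine hle.trans (sup_le ?_ le_sup_right)
      exact (le_sup_right : A ≤ K ⊔ A).trans le_sup_left
    have hcf3 := chief_inf hcf2 hle2
    have hFc3 := hBc _ _ hcf3 inf_le_right
    -- transfer up to (H ⊔ M) / M
    have hSeq2 : M ⊓ B = ((H ⊔ M) ⊓ B) ⊓ M := by
      ext x
      simp only [Subgroup.mem_inf]
      exact ⟨fun h => ⟨⟨(le_sup_right : M ≤ H ⊔ M) h.1, h.2⟩, h.1⟩, fun h => ⟨h.2, h.1.2⟩⟩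
    have hR'2 : H ⊔ M ≤ M ⊔ ((H ⊔ M) ⊓ B) := by
      intro x hx
      have : x ∈ (M : Set G) * (B : Set G) := by
        rw [← Subgroup.mul_normal M B]; exact_mod_cast hle2 hx
      obtain ⟨m, hm, b, hb, hmb⟩ := this
      have hbHM : b ∈ (H ⊔ M) ⊓ B := by
        refine Subgroup.mem_inf.2 ⟨?_, hb⟩
        have : b = m⁻¹ * x := by rw [← hmb]; group
        rw [this]; exact mul_mem (inv_mem ((le_sup_right : M ≤ H ⊔ M) hm)) hx
      rw [← hmb]
      exact Subgroup.mul_mem_sup hm hbHM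
    obtain ⟨e2, he2⟩ := exists_gequiv (S := M ⊓ B) (R := (H ⊔ M) ⊓ B) (S' := M) (R' := H ⊔ M)
      inf_le_left hSeq2 hR'2
    have hFc2 : FCentralSection F (H ⊔ M) M := fcentral_of_equiv F hF e2 he2 hFc3
    -- transfer down to H / K
    obtain ⟨e3, he3⟩ := exists_gequiv (S := K) (R := H) (S' := M) (R' := H ⊔ M)
      le_sup_left hHM.symm (sup_le le_sup_right le_sup_left)
    have he3' : ∀ g x, e3.symm (secAction (H ⊔ M) M g x) = secAction H K g (e3.symm x) := by
      intro g x
      apply e3.injective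
      rw [he3, e3.apply_symm_apply, e3.apply_symm_apply]
    exact fcentral_of_equiv F hF e3.symm he3' hFc2

end Lemma4Aux

/-- **Lemma 4(i).** For a hereditary formation `𝔉`, the `𝔉`-hypercentre `Z_𝔉(G)` of a
finite group `G` is `𝔉`-hypercentral in `G`: it is normal and every chief factor of `G`
below it is `𝔉`-central in `G`. -/
theorem FHypercentralIn_FHypercentre
    (F : GroupClass) (hF : F.IsFormation) (hHer : F.Hereditary)
    (G : Type) [Group G] [Finite G] :
    FHypercentralIn F (FHypercentre F G) := by
  classical
  have hbot : FHypercentralIn F (⊥ : Subgroup G) := by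
    refine ⟨inferInstance, fun H K hcf hle => absurd bot_le (hcf.2.2.1.trans_le hle).not_ge⟩
  set s : Set (Subgroup G) := {N | FHypercentralIn F N} with hs
  have hsc : SupClosed s := fun A hA B hB => hyper_sup F hF hA hB
  have hsfin : s.Finite := Set.toFinite s
  set t : Finset (Subgroup G) := hsfin.toFinset with ht
  have htne : t.Nonempty := ⟨⊥, by rw [ht, Set.Finite.mem_toFinset]; exact hbot⟩
  have hM : t.sup id ∈ s := hsc.finsetSup_mem htne (fun i hi => by
    rwa [ht, Set.Finite.mem_toFinset] at hi)
  have h1 : FHypercentre F G = t.sup id := by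
    refine le_antisymm ?_ ?_
    · refine iSup_le fun N => iSup_le fun hN => ?_
      exact Finset.le_sup (f := id) (by rw [ht, Set.Finite.mem_toFinset]; exact hN)
    · exact le_iSup₂ (f := fun (N : Subgroup G) (_ : FHypercentralIn F N) => N) (t.sup id) hM
  rw [h1]
  exact hM
end

section
/- Let 𝔉 be a saturated formation, G a finite group, N a normal subgroup of G, and U a subgroup of G such that U ∈ 𝔉 and NU = G. Then Z := U ∩ C_G(N) is a normal subgroup of G and Z ≤ Z_𝔉(G). -/
/-! `Z = U ∩ C_G(N)` is normalized by `U` and centralizes `N`, hence is normal in `G = NU`.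
For a normal section `R/S` of `G` with `R ≤ Z`, its centralizer `C` contains `N`, so `G/C` is
an image of `U/(S ∩ U)`. As `R ≤ U`, the section `R/S` embeds `U`-equivariantly into
`U/(S ∩ U)`, which makes `[R/S](U/(S ∩ U))` a subdirect product of two copies of
`U/(S ∩ U) ∈ 𝔉`; it maps onto `[R/S](G/C)`, so `R/S` is `𝔉`-central. -/

namespace GroupClass

variable {F : GroupClass}

theorem residual_le_of_quotient_mem {G : Type} [Group G] [Finite G] {N : Subgroup G}
    [hN : N.Normal] (h : F (G ⧸ N)) : F.residual G ≤ N :=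
  sInf_le ⟨hN, h⟩

namespace IsFormation

theorem mem_of_residual_eq_bot (hF : F.IsFormation) {G : Type} [Group G] [Finite G]
    (h : F.residual G = ⊥) : F G :=
  hF.isoClosed _ _ QuotientGroup.quotientBot
    (hF.quot_residual_mem G ⊥ inferInstance h.le)

theorem residual_eq_bot (hF : F.IsFormation) {G : Type} [Group G] [Finite G] (hG : F G) :
    F.residual G = ⊥ :=
  le_bot_iff.mp <|
    residual_le_of_quotient_mem (hF.isoClosed _ _ QuotientGroup.quotientBot.symm hG)

theorem quotient_mem (hF : F.IsFormation) {G : Type} [Group G] [Finite G] (hG : F G)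
    (N : Subgroup G) [hN : N.Normal] : F (G ⧸ N) :=
  hF.quot_residual_mem G N hN (hF.residual_eq_bot hG ▸ bot_le)

theorem mem_of_surjective (hF : F.IsFormation) {G H : Type} [Group G] [Finite G] [Group H]
    [Finite H] (hG : F G) (f : G →* H) (hf : Function.Surjective f) : F H :=
  hF.isoClosed _ _ (QuotientGroup.quotientKerEquivOfSurjective f hf) (hF.quotient_mem hG f.ker)

theorem mem_of_inf_eq_bot (hF : F.IsFormation) {G : Type} [Group G] [Finite G]
    {A B : Subgroup G} [A.Normal] [B.Normal] (hAB : A ⊓ B = ⊥)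
    (hA : F (G ⧸ A)) (hB : F (G ⧸ B)) : F G :=
  hF.mem_of_residual_eq_bot <| le_bot_iff.mp <|
    hAB ▸ le_inf (residual_le_of_quotient_mem hA) (residual_le_of_quotient_mem hB)

/-- `M ⋊ X` is a subdirect product of two copies of `X`, via `(m, x) ↦ ι m * x` and `rightHom`. -/
theorem semidirectProduct_mem (hF : F.IsFormation) {M X : Type} [Group M] [Finite M]
    [Group X] [Finite X] (hX : F X) (φ : X →* MulAut M) (ι : M →* X)
    (hι : Function.Injective ι) (hφ : ∀ x m, ι (φ x m) = x * ι m * x⁻¹) :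
    F (M ⋊[φ] X) := by
  let f : M ⋊[φ] X →* X := SemidirectProduct.lift ι (MonoidHom.id X) fun x ↦ by
    ext m; simp [hφ, MulAut.conj_apply]
  have hf : Function.Surjective f := fun x ↦ ⟨SemidirectProduct.inr x, by simp [f]⟩
  refine hF.mem_of_inf_eq_bot (A := f.ker) (B := SemidirectProduct.rightHom.ker) ?_
    (hF.isoClosed _ _ (QuotientGroup.quotientKerEquivOfSurjective f hf).symm hX)
    (hF.isoClosed _ _ (QuotientGroup.quotientKerEquivOfSurjective _
      SemidirectProduct.rightHom_surjective).symm hX)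
  refine eq_bot_iff.mpr fun x hx ↦ ?_
  obtain ⟨hfx, hx⟩ := Subgroup.mem_inf.mp hx
  rw [MonoidHom.mem_ker, SemidirectProduct.rightHom_eq_right] at hx
  have hxl : x = SemidirectProduct.inl x.left := by
    rw [← SemidirectProduct.inl_left_mul_inr_right x, hx, map_one, mul_one]
    simp
  rw [MonoidHom.mem_ker, hxl, SemidirectProduct.lift_inl] at hfx
  rw [Subgroup.mem_bot, hxl, hι (hfx.trans ι.map_one.symm), map_one]

end IsFormation

end GroupClass

theorem SemidirectProduct.map_surjective {N₁ G₁ N₂ G₂ : Type*} [Group N₁] [Group G₁]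
    [Group N₂] [Group G₂] {φ₁ : G₁ →* MulAut N₁} {φ₂ : G₂ →* MulAut N₂}
    {fn : N₁ →* N₂} {fg : G₁ →* G₂}
    (h : ∀ g : G₁, fn.comp (φ₁ g).toMonoidHom = (φ₂ (fg g)).toMonoidHom.comp fn)
    (hn : Function.Surjective fn) (hg : Function.Surjective fg) :
    Function.Surjective (SemidirectProduct.map fn fg h) := by
  intro x
  obtain ⟨n, hn⟩ := hn x.left
  obtain ⟨g, hg⟩ := hg x.right
  exact ⟨⟨n, g⟩, SemidirectProduct.ext hn hg⟩

section SectionAction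

open scoped commutatorElement

variable {G : Type} [Group G] {R S : Subgroup G} [R.Normal] [S.Normal]

@[simp]
theorem secAction_mk (g : G) (r : R) :
    secAction R S g (r : R ⧸ S.subgroupOf R) = (MulAut.conjNormal g r : R) :=
  rfl

theorem le_secCentralizer_of_commutator_le {A : Subgroup G} (h : ⁅A, R⁆ ≤ S) :
    A ≤ secCentralizer R S := by
  intro g hg
  refine MulEquiv.ext fun x ↦ QuotientGroup.induction_on x fun r ↦ ?_
  rw [MulAut.one_apply, secAction_mk, QuotientGroup.eq, Subgroup.mem_subgroupOf]
  have hcomm : (((MulAut.conjNormal g r)⁻¹ * r : R) : G) = ⁅g, (r : G)⁻¹⁆ := by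
    simp [MulAut.conjNormal_apply, commutatorElement_def, mul_assoc]
  exact hcomm ▸ h (Subgroup.commutator_mem_commutator hg (inv_mem r.2))

theorem le_secCentralizer : S ≤ secCentralizer R S :=
  le_secCentralizer_of_commutator_le (Subgroup.commutator_le_left S R)

end SectionAction

section Supplement

variable {G : Type} [Group G]

def secActionQuotient (U R S : Subgroup G) [R.Normal] [S.Normal] :
    U ⧸ S.subgroupOf U →* MulAut (R ⧸ S.subgroupOf R) :=
  QuotientGroup.lift _ ((secAction R S).comp U.subtype) fun _ hu ↦
    show _ ∈ secCentralizer R S from le_secCentralizer (Subgroup.mem_subgroupOf.mp hu)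

variable {U R S : Subgroup G} [R.Normal] [S.Normal]

theorem semidirectProduct_secActionQuotient_mem {F : GroupClass} (hF : F.IsFormation)
    [Finite G] (hU : F U) (hRU : R ≤ U) :
    F ((R ⧸ S.subgroupOf R) ⋊[secActionQuotient U R S] (U ⧸ S.subgroupOf U)) := by
  have hS : S.subgroupOf R ≤ (S.subgroupOf U).comap (Subgroup.inclusion hRU) := fun _ ↦ id
  set ι := QuotientGroup.map _ _ _ hS with hιdef
  have hι : Function.Injective ι := by
    refine (injective_iff_map_eq_one ι).mpr fun x ↦ QuotientGroup.induction_on x fun r hr ↦ ?_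
    rw [hιdef, QuotientGroup.map_mk, QuotientGroup.eq_one_iff] at hr
    rw [QuotientGroup.eq_one_iff]
    exact hr
  refine hF.semidirectProduct_mem (hF.quotient_mem hU _) _ ι hι fun x m ↦ ?_
  induction x using QuotientGroup.induction_on
  induction m using QuotientGroup.induction_on
  rfl

theorem secSDP_mem_of_sup_secCentralizer_eq_top {F : GroupClass} (hF : F.IsFormation)
    [Finite G] (hU : F U) (hRU : R ≤ U) (hUC : U ⊔ secCentralizer R S = ⊤) :
    F (secSDP R S (secCentralizer R S) le_rfl) := by
  let ρ : U ⧸ S.subgroupOf U →* G ⧸ secCentralizer R S :=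
    QuotientGroup.map _ _ U.subtype fun _ hu ↦
      Subgroup.mem_comap.mpr (le_secCentralizer (Subgroup.mem_subgroupOf.mp hu))
  have hρ : Function.Surjective ρ := by
    refine fun x ↦ QuotientGroup.induction_on x fun g ↦ ?_
    have hg : g ∈ (U ⊔ secCentralizer R S : Subgroup G) := hUC ▸ Subgroup.mem_top g
    obtain ⟨u, hu, c, hc, rfl⟩ := Subgroup.mem_sup_of_normal_right.mp hg
    refine ⟨(⟨u, hu⟩ : U), ?_⟩
    simp [ρ, hc]
  have hcompat : ∀ x, (MonoidHom.id _).comp (secActionQuotient U R S x).toMonoidHom =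
      ((QuotientGroup.lift _ (secAction R S) fun _ hx ↦ hx) (ρ x)).toMonoidHom.comp
        (MonoidHom.id _) := by
    refine fun x ↦ QuotientGroup.induction_on x fun u ↦ ?_
    rfl
  exact hF.mem_of_surjective (semidirectProduct_secActionQuotient_mem hF hU hRU)
    (SemidirectProduct.map _ _ hcompat)
    (SemidirectProduct.map_surjective hcompat Function.surjective_id hρ)

end Supplement

theorem Subgroup.inf_centralizer_normal_of_sup_eq_top {G : Type*} [Group G] {N U : Subgroup G}
    [N.Normal] (hNU : N ⊔ U = ⊤) : (U ⊓ centralizer (N : Set G)).Normal := by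
  rw [← normalizer_eq_top_iff, eq_top_iff, ← hNU]
  refine sup_le ?_ ?_
  · exact (le_centralizer_iff.mp inf_le_right).trans (centralizer_le_normalizer _)
  · exact (le_inf U.le_normalizer le_normalizer_of_normal).trans inf_normalizer_le_normalizer_inf

theorem fCentralSection_of_le_inf_centralizer {F : GroupClass} (hF : F.IsFormation)
    {G : Type} [Group G] [Finite G] {N U R S : Subgroup G} [R.Normal] [S.Normal]
    (hU : F U) (hNU : N ⊔ U = ⊤) (hR : R ≤ U ⊓ Subgroup.centralizer (N : Set G)) :
    FCentralSection F R S := by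
  have hNR : ⁅N, R⁆ = ⊥ := Subgroup.commutator_eq_bot_iff_le_centralizer.mpr
    (Subgroup.le_centralizer_iff.mp (hR.trans inf_le_right))
  have hNC : N ≤ secCentralizer R S := le_secCentralizer_of_commutator_le (hNR ▸ bot_le)
  have hUC : U ⊔ secCentralizer R S = ⊤ := by
    rw [eq_top_iff, ← hNU, sup_comm N U]
    exact sup_le_sup_left hNC U
  exact ⟨_, inferInstance, le_rfl,
    secSDP_mem_of_sup_secCentralizer_eq_top hF hU (hR.trans inf_le_left) hUC⟩

theorem inf_centralizer_normal_and_le_FHypercentre_general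
    (F : GroupClass) (hF : F.IsFormation)
    {G : Type} [Group G] [Finite G] (N U : Subgroup G) [N.Normal]
    (hU : F U) (hNU : N ⊔ U = ⊤) :
    (U ⊓ Subgroup.centralizer (N : Set G)).Normal ∧
      U ⊓ Subgroup.centralizer (N : Set G) ≤ FHypercentre F G := by
  have hZ := Subgroup.inf_centralizer_normal_of_sup_eq_top hNU
  refine ⟨hZ, le_iSup₂_of_le _ ⟨hZ, fun H K hHK hH ↦ ?_⟩ le_rfl⟩
  have := hHK.1
  have := hHK.2.1
  exact fCentralSection_of_le_inf_centralizer hF hU hNU hH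

/-- **Lemma 6(ii).** Let `𝔉` be a saturated formation, `N` a normal subgroup of the
finite group `G`, and `U ∈ 𝔉` a subgroup with `NU = G`. Then `Z := U ∩ C_G(N)` is a
normal subgroup of `G` and `Z ≤ Z_𝔉(G)`. -/
theorem inf_centralizer_normal_and_le_FHypercentre
    (F : GroupClass) (hF : F.IsFormation) (hSat : F.Saturated)
    {G : Type} [Group G] [Finite G] (N U : Subgroup G) [N.Normal]
    (hU : F U) (hNU : N ⊔ U = ⊤) :
    (U ⊓ Subgroup.centralizer (N : Set G)).Normal ∧
      U ⊓ Subgroup.centralizer (N : Set G) ≤ FHypercentre F G :=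
  inf_centralizer_normal_and_le_FHypercentre_general F hF N U hU hNU
end
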